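/- arXiv:1601.00882 — 4 statements merged into one kernel-verified Lean document; each statement's English description precedes it below -/
import Mathlib

section
/- Suppose G : ℝ → ℂ is m times continuously differentiable and satisfies G^{(m)}(−t) = O(t^{−1−m}(log t)^{−α−1}) as t → +∞. Define g(−j) = G(−j) and the iterated differences g^{(m)} as above. Then g^{(m)}(−j) = O(j^{−1−m}(log j)^{−α−1}) as j → +∞. -/
open MeasureTheory

/-- The forward difference operator on functions of an integer variable. -/
noncomputable def fwdDiffZ (g : ℤ → ℂ) : ℤ → ℂ := fun n => g (n + 1) - g n

lemma my_iteratedDeriv_sub {n : ℕ} {f g : ℝ → ℂ} (hf : ContDiff ℝ n f) (hg : ContDiff ℝ n g) :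
    iteratedDeriv n (fun x => f x - g x) = fun x => iteratedDeriv n f x - iteratedDeriv n g x := by
  induction n with
  | zero => simp
  | succ n ih =>
    funext x
    rw [iteratedDeriv_succ, iteratedDeriv_succ, iteratedDeriv_succ,
      ih hf.of_succ hg.of_succ]
    exact deriv_sub
      ((hf.differentiable_iteratedDeriv n (by exact_mod_cast n.lt_succ_self)).differentiableAt)
      ((hg.differentiable_iteratedDeriv n (by exact_mod_cast n.lt_succ_self)).differentiableAt)

lemma key_bound : ∀ (m : ℕ) (f : ℝ → ℂ), ContDiff ℝ m f → ∀ (x : ℤ) (M : ℝ),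
    (∀ t ∈ Set.Icc (x : ℝ) (x + m), ‖iteratedDeriv m f t‖ ≤ M) →
    ‖(fwdDiffZ^[m] fun n : ℤ => f n) x‖ ≤ M := by
  intro m
  induction m with
  | zero =>
    intro f _ x M hM
    simpa using hM x (by simp)
  | succ m ih =>
    intro f hf x M hM
    set F : ℝ → ℂ := fun y => f (y + 1) - f y with hF
    have hFc : ContDiff ℝ m F := by
      have h1 : ContDiff ℝ m (fun y : ℝ => f (y + 1)) :=
        (hf.of_succ).comp (contDiff_id.add contDiff_const)
      exact h1.sub hf.of_succ
    have hFd : iteratedDeriv m F = fun t => iteratedDeriv m f (t + 1) - iteratedDeriv m f t := by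
      have h1 : ContDiff ℝ m (fun y : ℝ => f (y + 1)) :=
        (hf.of_succ).comp (contDiff_id.add contDiff_const)
      rw [hF]
      rw [my_iteratedDeriv_sub h1 hf.of_succ, iteratedDeriv_comp_add_const m f 1]
    have hstep : (fwdDiffZ^[m + 1] fun n : ℤ => f n) x
        = (fwdDiffZ^[m] fun n : ℤ => F n) x := by
      rw [Function.iterate_succ_apply]
      have : (fwdDiffZ fun n : ℤ => f n) = fun n : ℤ => F n := by
        funext n
        simp only [fwdDiffZ, hF]
        push_cast
        ring_nf
      rw [this]
    rw [hstep]
    apply ih F hFc x M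
    intro t ht
    rw [hFd]
    -- MVT bound on Icc x (x + (m+1))
    have hconv : Convex ℝ (Set.Icc (x : ℝ) (x + (m + 1 : ℕ))) := convex_Icc _ _
    have hderiv : ∀ y ∈ Set.Icc (x : ℝ) (x + (m + 1 : ℕ)),
        HasDerivWithinAt (iteratedDeriv m f) (iteratedDeriv (m + 1) f y)
          (Set.Icc (x : ℝ) (x + (m + 1 : ℕ))) y := by
      intro y _
      have := (hf.differentiable_iteratedDeriv m
        (by exact_mod_cast m.lt_succ_self)) y
      rw [iteratedDeriv_succ]
      exact this.hasDerivAt.hasDerivWithinAt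
    have hbd : ∀ y ∈ Set.Icc (x : ℝ) (x + (m + 1 : ℕ)),
        ‖iteratedDeriv (m + 1) f y‖ ≤ M := fun y hy => hM y hy
    have hmem1 : t ∈ Set.Icc (x : ℝ) (x + (m + 1 : ℕ)) := by
      constructor
      · exact ht.1
      · have := ht.2; push_cast at this ⊢; linarith
    have hmem2 : t + 1 ∈ Set.Icc (x : ℝ) (x + (m + 1 : ℕ)) := by
      constructor
      · have := ht.1; linarith
      · have := ht.2; push_cast at this ⊢; linarith
    have := hconv.norm_image_sub_le_of_norm_hasDerivWithin_le hderiv hbd hmem1 hmem2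
    simpa using this

/-- If `G` is `C^m` and `G^{(m)}(−t) = O(t^{−1−m}(log t)^{−α−1})` as `t → +∞`, then the
iterated differences of `g(−j) = G(−j)` satisfy `g^{(m)}(−j) = O(j^{−1−m}(log j)^{−α−1})`. -/
theorem stmt7 (α : ℝ) (hα : 0 < α) (m : ℕ) (G : ℝ → ℂ) (hG : ContDiff ℝ m G)
    (hO : ∃ C T : ℝ, ∀ t : ℝ, T ≤ t →
      ‖iteratedDeriv m G (-t)‖ ≤ C * t ^ (-1 - (m : ℝ)) * Real.log t ^ (-α - 1)) :
    ∃ C : ℝ, ∃ J : ℕ, ∀ j : ℕ, J ≤ j →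
      ‖(fwdDiffZ^[m] fun n : ℤ => G n) (-(j : ℤ))‖ ≤
        C * (j : ℝ) ^ (-1 - (m : ℝ)) * Real.log j ^ (-α - 1) := by
  obtain ⟨C, T, hO⟩ := hO
  have hC : 0 ≤ C := by
    set t0 : ℝ := max T 2 with ht0
    have h1 : T ≤ t0 := le_max_left _ _
    have h2 : (2 : ℝ) ≤ t0 := le_max_right _ _
    have h := (norm_nonneg _).trans (hO t0 h1)
    have hp1 : 0 < t0 ^ (-1 - (m : ℝ)) := Real.rpow_pos_of_pos (by linarith) _
    have hp2 : 0 < Real.log t0 ^ (-α - 1) := by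
      have : 0 < Real.log t0 := Real.log_pos (by linarith)
      exact Real.rpow_pos_of_pos this _
    by_contra hneg
    push_neg at hneg
    have : C * t0 ^ (-1 - (m : ℝ)) * Real.log t0 ^ (-α - 1) < 0 :=
      mul_neg_of_neg_of_pos (mul_neg_of_neg_of_pos hneg hp1) hp2
    linarith
  refine ⟨C * 2 ^ ((1 : ℝ) + m) * 2 ^ (α + 1), max (Nat.ceil T + m) (max (2 * m + 1) 4), ?_⟩
  intro j hj
  have hj1 : Nat.ceil T + m ≤ j := le_trans (le_max_left _ _) hj
  have hj2 : 2 * m + 1 ≤ j := le_trans ((le_max_left _ _).trans (le_max_right _ _)) hj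
  have hj4 : (4 : ℕ) ≤ j := le_trans ((le_max_right _ _).trans (le_max_right _ _)) hj
  have hj4' : (4 : ℝ) ≤ (j : ℝ) := by exact_mod_cast hj4
  have hj2' : 2 * (m : ℝ) + 1 ≤ (j : ℝ) := by exact_mod_cast hj2
  have hjT : (Nat.ceil T : ℝ) + m ≤ (j : ℝ) := by exact_mod_cast hj1
  have hlog4 : (0 : ℝ) < Real.log j := Real.log_pos (by linarith)
  have hlogj : 2 * Real.log 2 ≤ Real.log j := by
    have h4 : Real.log 4 ≤ Real.log j := Real.log_le_log (by norm_num) hj4'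
    have : Real.log (4 : ℝ) = 2 * Real.log 2 := by
      rw [show (4 : ℝ) = 2 ^ (2 : ℕ) by norm_num, Real.log_pow]
      push_cast; ring
    linarith
  apply key_bound m G hG (-(j : ℤ))
  intro t ht
  simp only [Int.cast_neg, Int.cast_natCast] at ht
  set s : ℝ := -t with hs
  have hts : t = -s := by simp [hs]
  have hsl : (j : ℝ) - m ≤ s := by
    have := ht.2; simp [hs]; linarith
  have hsu : s ≤ (j : ℝ) := by
    have := ht.1; simp [hs]; linarith
  have hs2 : (j : ℝ) / 2 ≤ s := by linarith
  have hspos : 0 < s := by linarith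
  have hTs : T ≤ s := by
    have := Nat.le_ceil T
    linarith
  have hlogs : Real.log j / 2 ≤ Real.log s := by
    have hls : Real.log ((j : ℝ) / 2) ≤ Real.log s := Real.log_le_log (by positivity) hs2
    rw [Real.log_div (by positivity) (by norm_num)] at hls
    linarith
  have hlogspos : 0 < Real.log s := by
    have h2 : (0:ℝ) < Real.log 2 := Real.log_pos (by norm_num)
    linarith
  rw [hts]
  have h := hO s hTs
  have h1 : s ^ (-1 - (m : ℝ)) ≤ ((j : ℝ) / 2) ^ (-1 - (m : ℝ)) :=
    Real.rpow_le_rpow_of_nonpos (by positivity) hs2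
      (by have : (0:ℝ) ≤ m := Nat.cast_nonneg m; linarith)
  have h2 : Real.log s ^ (-α - 1) ≤ (Real.log j / 2) ^ (-α - 1) :=
    Real.rpow_le_rpow_of_nonpos (by positivity) hlogs (by linarith)
  have e1 : ((j : ℝ) / 2) ^ (-1 - (m : ℝ)) = (j : ℝ) ^ (-1 - (m : ℝ)) * 2 ^ ((1 : ℝ) + m) := by
    rw [Real.div_rpow (by positivity) (by norm_num), div_eq_mul_inv,
      ← Real.rpow_neg (by norm_num)]
    congr 1
    ring
  have e2 : (Real.log j / 2) ^ (-α - 1) = Real.log j ^ (-α - 1) * 2 ^ (α + 1) := by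
    rw [Real.div_rpow (by positivity) (by norm_num), div_eq_mul_inv,
      ← Real.rpow_neg (by norm_num)]
    congr 1
    ring
  calc ‖iteratedDeriv m G (-s)‖ ≤ C * s ^ (-1 - (m : ℝ)) * Real.log s ^ (-α - 1) := h
    _ ≤ C * ((j : ℝ) / 2) ^ (-1 - (m : ℝ)) * (Real.log j / 2) ^ (-α - 1) := by
        apply mul_le_mul (mul_le_mul_of_nonneg_left h1 hC) h2 (by positivity)
        positivity
    _ = C * 2 ^ ((1 : ℝ) + m) * 2 ^ (α + 1) * ((j : ℝ) ^ (-1 - (m : ℝ)) * Real.log (j : ℝ) ^ (-α - 1)) := by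
        rw [e1, e2]; ring
    _ = _ := by ring
end

section
/- Define the counting functions ν(s) = #{n ≥ 0 : ρ_n > s}, ν⁺(s) = #{n ≥ 0 : ρ_n⁺ > s}, ν⁻(s) = #{n ≥ 0 : ρ_n⁻ > s} for three non-increasing sequences (ρ_n), (ρ_n⁺), (ρ_n⁻) of nonnegative reals tending to 0, related by ρ_n = min{ max(ρ_{n₊}⁺, ρ_{n₋}⁻) : n₊ + n₋ = n, n₊, n₋ ≥ 0 }. Then for every s > 0, ν(s) = ν⁺(s) + ν⁻(s). -/
open Filter

lemma aux_dc (S : Set ℕ) (hfin : S.Finite) (hdc : ∀ m n, m ≤ n → n ∈ S → m ∈ S) :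
    ∀ n, n ∈ S ↔ n < S.ncard := by
  intro n
  constructor
  · intro hn
    have hsub : Set.Iic n ⊆ S := fun m hm => hdc m n hm hn
    have h1 : (Set.Iic n).ncard ≤ S.ncard := Set.ncard_le_ncard hsub hfin
    have h2 : (Set.Iic n).ncard = n + 1 := by
      rw [← Finset.coe_Iic, Set.ncard_coe_finset, Nat.card_Iic]
    omega
  · intro hn
    by_contra hns
    have hsub : S ⊆ Set.Iio n := by
      intro m hm
      by_contra hmn
      exact hns (hdc n m (by simpa [Set.mem_Iio] using hmn) hm)
    have h1 : S.ncard ≤ (Set.Iio n).ncard :=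
      Set.ncard_le_ncard hsub (Set.finite_Iio n)
    have h2 : (Set.Iio n).ncard = n := by
      rw [← Finset.coe_Iio, Set.ncard_coe_finset, Nat.card_Iio]
    omega

lemma aux_fin (f : ℕ → ℝ) (hlim : Tendsto f atTop (nhds 0)) {s : ℝ} (hs : 0 < s) :
    {n : ℕ | s < f n}.Finite := by
  have := (hlim.eventually (eventually_lt_nhds hs)).exists_forall_of_atTop
  obtain ⟨N, hN⟩ := this
  apply Set.Finite.subset (Set.finite_Iio N)
  intro n hn
  simp only [Set.mem_Iio]
  by_contra h
  exact absurd (hN n (by omega)) (by simp only [Set.mem_setOf_eq] at hn; linarith)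

/-- If three non-increasing null sequences of nonnegative reals satisfy
`ρ_n = min { max(ρ⁺_{n₊}, ρ⁻_{n₋}) : n₊ + n₋ = n }`, then the counting functions
satisfy `ν(s) = ν⁺(s) + ν⁻(s)` for every `s > 0`. -/
theorem stmt13 (ρ ρp ρm : ℕ → ℝ)
    (hρ : Antitone ρ) (hρp : Antitone ρp) (hρm : Antitone ρm)
    (hρ0 : ∀ n, 0 ≤ ρ n) (hρp0 : ∀ n, 0 ≤ ρp n) (hρm0 : ∀ n, 0 ≤ ρm n)
    (hlim : Tendsto ρ atTop (nhds 0)) (hlimp : Tendsto ρp atTop (nhds 0))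
    (hlimm : Tendsto ρm atTop (nhds 0))
    (hrel : ∀ n, ρ n = sInf {x : ℝ | ∃ np nm : ℕ, np + nm = n ∧ x = max (ρp np) (ρm nm)}) :
    ∀ s : ℝ, 0 < s →
      {n : ℕ | s < ρ n}.ncard = {n : ℕ | s < ρp n}.ncard + {n : ℕ | s < ρm n}.ncard := by
  intro s hs
  set a := {n : ℕ | s < ρp n}.ncard with ha
  set b := {n : ℕ | s < ρm n}.ncard with hb
  have hfinp := aux_fin ρp hlimp hs
  have hfinm := aux_fin ρm hlimm hs
  have hfin := aux_fin ρ hlim hs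
  have hdcp : ∀ m n : ℕ, m ≤ n → n ∈ {n : ℕ | s < ρp n} → m ∈ {n : ℕ | s < ρp n} :=
    fun m n hmn hn => lt_of_lt_of_le hn (hρp hmn)
  have hdcm : ∀ m n : ℕ, m ≤ n → n ∈ {n : ℕ | s < ρm n} → m ∈ {n : ℕ | s < ρm n} :=
    fun m n hmn hn => lt_of_lt_of_le hn (hρm hmn)
  have hmemp : ∀ n, s < ρp n ↔ n < a := aux_dc _ hfinp hdcp
  have hmemm : ∀ n, s < ρm n ↔ n < b := aux_dc _ hfinm hdcm
  -- the set of decompositions is finite nonempty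
  have hTne : ∀ n : ℕ, {x : ℝ | ∃ np nm : ℕ, np + nm = n ∧ x = max (ρp np) (ρm nm)}.Nonempty :=
    fun n => ⟨max (ρp n) (ρm 0), n, 0, by simp⟩
  have hTfin : ∀ n : ℕ, {x : ℝ | ∃ np nm : ℕ, np + nm = n ∧ x = max (ρp np) (ρm nm)}.Finite := by
    intro n
    apply Set.Finite.subset
      (Set.Finite.image (fun np => max (ρp np) (ρm (n - np))) (Set.finite_Iic n))
    rintro x ⟨np, nm, hsum, rfl⟩
    refine ⟨np, ?_, ?_⟩
    · exact Set.mem_Iic.mpr (by omega)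
    · have h : n - np = nm := by omega
      simp only [h]
  have hTbdd : ∀ n : ℕ, BddBelow {x : ℝ | ∃ np nm : ℕ, np + nm = n ∧ x = max (ρp np) (ρm nm)} :=
    fun n => (hTfin n).bddBelow
  -- characterize s < ρ n ↔ n < a + b
  have hmem : ∀ n, s < ρ n ↔ n < a + b := by
    intro n
    constructor
    · intro hn
      by_contra hab
      push_neg at hab
      have hba : b ≤ n - a := by omega
      have h1 : ρp a ≤ s := le_of_not_gt (fun h => by simp [hmemp] at h)
      have h2 : ρm (n - a) ≤ ρm b := hρm hba
      have h3 : ρm b ≤ s := le_of_not_gt (fun h => by simp [hmemm] at h)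
      have hx : max (ρp a) (ρm (n - a)) ∈
          {x : ℝ | ∃ np nm : ℕ, np + nm = n ∧ x = max (ρp np) (ρm nm)} :=
        ⟨a, n - a, by omega, rfl⟩
      have := csInf_le (hTbdd n) hx
      rw [← hrel n] at this
      have : ρ n ≤ s := this.trans (max_le h1 (h2.trans h3))
      linarith
    · intro hn
      have hmin := (hTne n).csInf_mem (hTfin n)
      obtain ⟨np, nm, hsum, heq⟩ := hmin
      rw [hrel n, heq]
      have : np < a ∨ nm < b := by omega
      rcases this with h | h
      · exact lt_max_of_lt_left ((hmemp np).mpr h)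
      · exact lt_max_of_lt_right ((hmemm nm).mpr h)
  have : {n : ℕ | s < ρ n} = Set.Iio (a + b) := by
    ext n; simpa [Set.mem_Iio] using hmem n
  rw [this, ← Finset.coe_Iio, Set.ncard_coe_finset, Nat.card_Iio]
end

section
/- Let (ρ_n⁺) and (ρ_n⁻) be non-increasing sequences of nonnegative reals tending to 0, and suppose that for some α > 0 and constants a⁺, a⁻ ≥ 0 one has lim_{n→∞} n^α ρ_n^± = a^±. Define ρ_n = min{ max(ρ_{n₊}⁺, ρ_{n₋}⁻) : n₊ + n₋ = n }. Then lim_{n→∞} n^α ρ_n = ((a⁺)^{1/α} + (a⁻)^{1/α})^α. -/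
open Filter

/-- key limit: if `n^α f n → a`, `k n → ∞`, `k n / n → θ > 0`, then `n^α f (k n) → a / θ^α`. -/
private lemma ratio_limit (α : ℝ) (hα : 0 < α) (a θ : ℝ) (hθ : 0 < θ) (f : ℕ → ℝ)
    (hf : Tendsto (fun n : ℕ => (n : ℝ) ^ α * f n) atTop (nhds a))
    (k : ℕ → ℕ) (hk : Tendsto k atTop atTop)
    (hratio : Tendsto (fun n : ℕ => (k n : ℝ) / (n : ℝ)) atTop (nhds θ)) :
    Tendsto (fun n : ℕ => (n : ℝ) ^ α * f (k n)) atTop (nhds (a / θ ^ α)) := by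
  have hu : Tendsto (fun n : ℕ => (k n : ℝ) ^ α * f (k n)) atTop (nhds a) := hf.comp hk
  have hinv : Tendsto (fun n : ℕ => (n : ℝ) / (k n : ℝ)) atTop (nhds θ⁻¹) := by
    simpa [inv_div] using hratio.inv₀ (ne_of_gt hθ)
  have hr : Tendsto (fun n : ℕ => ((n : ℝ) / (k n : ℝ)) ^ α) atTop (nhds (θ⁻¹ ^ α)) :=
    ((Real.continuousAt_rpow_const _ _ (Or.inr hα.le)).tendsto).comp hinv
  have hmul := hr.mul hu
  have heq : θ⁻¹ ^ α * a = a / θ ^ α := by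
    rw [Real.inv_rpow hθ.le]; ring
  rw [heq] at hmul
  apply hmul.congr'
  filter_upwards [hk.eventually_ge_atTop 1] with n hkn
  have hk0 : (0:ℝ) < (k n : ℝ) := by exact_mod_cast hkn
  have key : ((n:ℝ)/(k n : ℝ))^α * ((k n : ℝ))^α = (n:ℝ)^α := by
    rw [← Real.mul_rpow (by positivity) (by positivity), div_mul_cancel₀ _ (ne_of_gt hk0)]
  calc ((n:ℝ)/(k n : ℝ))^α * ((k n : ℝ)^α * f (k n))
      = (((n:ℝ)/(k n : ℝ))^α * (k n : ℝ)^α) * f (k n) := by ring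
    _ = (n:ℝ)^α * f (k n) := by rw [key]

/-- the splitting inequality. -/
private lemma split_ineq (α : ℝ) (hα : 0 < α) (A B : ℝ) (hA : 0 ≤ A) (hB : 0 ≤ B)
    (hKpos : 0 < (A ^ (1/α) + B ^ (1/α)) ^ α)
    (x y : ℝ) (hx : 0 < x) (hy : 0 < y) :
    (A ^ (1/α) + B ^ (1/α)) ^ α / (x + y) ^ α ≤ max (A / x ^ α) (B / y ^ α) := by
  set bA := A ^ (1/α) with hbA
  set bB := B ^ (1/α) with hbB
  have hbA0 : 0 ≤ bA := Real.rpow_nonneg hA _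
  have hbB0 : 0 ≤ bB := Real.rpow_nonneg hB _
  have hs : 0 < bA + bB := by
    rcases lt_or_ge 0 (bA + bB) with h | h
    · exact h
    · exfalso
      have : bA + bB = 0 := le_antisymm h (by positivity)
      rw [this, Real.zero_rpow (ne_of_gt hα)] at hKpos
      exact lt_irrefl 0 hKpos
  have hAeq : A = bA ^ α := by
    rw [hbA, one_div, Real.rpow_inv_rpow hA (ne_of_gt hα)]
  have hBeq : B = bB ^ α := by
    rw [hbB, one_div, Real.rpow_inv_rpow hB (ne_of_gt hα)]
  by_contra h
  push_neg at h
  rw [max_lt_iff] at h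
  obtain ⟨h1, h2⟩ := h
  have e1 : A / x ^ α = (bA / x) ^ α := by
    rw [Real.div_rpow hbA0 hx.le, ← hAeq]
  have e2 : B / y ^ α = (bB / y) ^ α := by
    rw [Real.div_rpow hbB0 hy.le, ← hBeq]
  have e3 : (bA + bB) ^ α / (x + y) ^ α = ((bA + bB) / (x + y)) ^ α := by
    rw [Real.div_rpow hs.le (by positivity)]
  rw [e1, e3] at h1
  rw [e2, e3] at h2
  have hxy : 0 < x + y := by linarith
  have l1 : bA / x < (bA + bB) / (x + y) := by
    by_contra hle
    push_neg at hle
    exact absurd (Real.rpow_le_rpow (by positivity) hle hα.le) (not_le.mpr h1)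
  have l2 : bB / y < (bA + bB) / (x + y) := by
    by_contra hle
    push_neg at hle
    exact absurd (Real.rpow_le_rpow (by positivity) hle hα.le) (not_le.mpr h2)
  rw [div_lt_div_iff₀ hx hxy] at l1
  rw [div_lt_div_iff₀ hy hxy] at l2
  nlinarith

private lemma ceil_ratio (θ : ℝ) (hθ0 : 0 < θ) :
    Tendsto (fun n : ℕ => ((⌈θ * n⌉₊ : ℝ)) / (n : ℝ)) atTop (nhds θ) := by
  apply tendsto_of_tendsto_of_tendsto_of_le_of_le' tendsto_const_nhds
    (g := fun _ => θ) (h := fun n : ℕ => θ + 1 / (n:ℝ))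
  · simpa using (tendsto_const_nhds (x := θ)).add tendsto_one_div_atTop_nhds_zero_nat
  · filter_upwards [eventually_ge_atTop 1] with n hn
    have hn0 : (0:ℝ) < n := by exact_mod_cast hn
    rw [le_div_iff₀ hn0]
    exact Nat.le_ceil _
  · filter_upwards [eventually_ge_atTop 1] with n hn
    have hn0 : (0:ℝ) < n := by exact_mod_cast hn
    rw [div_le_iff₀ hn0]
    have h1 : ((⌈θ * n⌉₊ : ℝ)) < θ * n + 1 := Nat.ceil_lt_add_one (by positivity)
    have : (θ + 1/(n:ℝ)) * n = θ * n + 1 := by field_simp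
    linarith

private lemma ceil_tendsto (θ : ℝ) (hθ0 : 0 < θ) :
    Tendsto (fun n : ℕ => ⌈θ * n⌉₊) atTop atTop := by
  rw [← tendsto_natCast_atTop_iff (R := ℝ)]
  apply tendsto_atTop_mono (fun n : ℕ => Nat.le_ceil (θ * n))
  exact (tendsto_natCast_atTop_atTop).const_mul_atTop hθ0


/-- If `n^α ρ_n^± → a^±` and `ρ_n = min { max(ρ⁺_{n₊}, ρ⁻_{n₋}) : n₊ + n₋ = n }`, then
`n^α ρ_n → ((a⁺)^{1/α} + (a⁻)^{1/α})^α`. -/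
theorem stmt14 (α : ℝ) (hα : 0 < α) (ap am : ℝ) (hap : 0 ≤ ap) (ham : 0 ≤ am)
    (ρ ρp ρm : ℕ → ℝ)
    (hρp : Antitone ρp) (hρm : Antitone ρm)
    (hρp0 : ∀ n, 0 ≤ ρp n) (hρm0 : ∀ n, 0 ≤ ρm n)
    (hlimp : Tendsto ρp atTop (nhds 0)) (hlimm : Tendsto ρm atTop (nhds 0))
    (hp : Tendsto (fun n : ℕ => (n : ℝ) ^ α * ρp n) atTop (nhds ap))
    (hm : Tendsto (fun n : ℕ => (n : ℝ) ^ α * ρm n) atTop (nhds am))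
    (hrel : ∀ n, ρ n = sInf {x : ℝ | ∃ np nm : ℕ, np + nm = n ∧ x = max (ρp np) (ρm nm)}) :
    Tendsto (fun n : ℕ => (n : ℝ) ^ α * ρ n) atTop
      (nhds ((ap ^ (1 / α) + am ^ (1 / α)) ^ α)) := by
  set b := ap ^ (1/α) with hbdef
  set c := am ^ (1/α) with hcdef
  set L := (b + c) ^ α with hLdef
  have hb0 : 0 ≤ b := Real.rpow_nonneg hap _
  have hc0 : 0 ≤ c := Real.rpow_nonneg ham _
  have hbα : b ^ α = ap := by rw [hbdef, one_div, Real.rpow_inv_rpow hap (ne_of_gt hα)]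
  have hcα : c ^ α = am := by rw [hcdef, one_div, Real.rpow_inv_rpow ham (ne_of_gt hα)]
  have hSbdd : ∀ n : ℕ, BddBelow {x : ℝ | ∃ np nm : ℕ, np + nm = n ∧ x = max (ρp np) (ρm nm)} := by
    intro n
    refine ⟨0, ?_⟩
    rintro x ⟨np, nm, -, rfl⟩
    exact le_trans (hρp0 np) (le_max_left _ _)
  have hSne : ∀ n : ℕ, ({x : ℝ | ∃ np nm : ℕ, np + nm = n ∧ x = max (ρp np) (ρm nm)}).Nonempty :=
    fun n => ⟨max (ρp n) (ρm 0), n, 0, by simp, rfl⟩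
  have hρ_le : ∀ n np nm : ℕ, np + nm = n → ρ n ≤ max (ρp np) (ρm nm) := by
    intro n np nm h
    rw [hrel n]
    exact csInf_le (hSbdd n) ⟨np, nm, h, rfl⟩
  have hρ0 : ∀ n, 0 ≤ ρ n := by
    intro n
    rw [hrel n]
    apply le_csInf (hSne n)
    rintro x ⟨np, nm, -, rfl⟩
    exact le_trans (hρp0 np) (le_max_left _ _)
  have hρ_ge : ∀ (n : ℕ) (t : ℝ), (∀ np nm : ℕ, np + nm = n → t ≤ max (ρp np) (ρm nm)) →
      t ≤ ρ n := by
    intro n t h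
    rw [hrel n]
    apply le_csInf (hSne n)
    rintro x ⟨np, nm, hs, rfl⟩
    exact h np nm hs
  rw [tendsto_order]
  constructor
  · -- lower bound
    intro b' hb'
    rcases lt_or_ge b' 0 with hneg | hb'0
    · refine Eventually.of_forall (fun n => lt_of_lt_of_le hneg ?_)
      exact mul_nonneg (Real.rpow_nonneg (Nat.cast_nonneg n) α) (hρ0 n)
    · -- choose δ by continuity
      have hcont : ContinuousAt
          (fun t : ℝ => (max (ap - t) 0 ^ (1/α) + max (am - t) 0 ^ (1/α)) ^ α) 0 := by
        have h1 : ContinuousAt (fun t : ℝ => max (ap - t) 0 ^ (1/α)) 0 :=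
          ContinuousAt.rpow_const (by fun_prop) (Or.inr (by positivity))
        have h2 : ContinuousAt (fun t : ℝ => max (am - t) 0 ^ (1/α)) 0 :=
          ContinuousAt.rpow_const (by fun_prop) (Or.inr (by positivity))
        exact ContinuousAt.rpow_const (h1.add h2) (Or.inr hα.le)
      have hval : b' < (max (ap - (0:ℝ)) 0 ^ (1/α) + max (am - (0:ℝ)) 0 ^ (1/α)) ^ α := by
        rw [sub_zero, sub_zero, max_eq_left hap, max_eq_left ham]
        exact hb'
      have hev : ∀ᶠ t in nhds (0:ℝ),
          b' < (max (ap - t) 0 ^ (1/α) + max (am - t) 0 ^ (1/α)) ^ α :=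
        hcont.tendsto.eventually (eventually_gt_nhds hval)
      obtain ⟨ε, hε, hball⟩ := Metric.eventually_nhds_iff.mp hev
      have hδ0 : 0 < ε/2 := by linarith
      have hKb' : b' < (max (ap - ε/2) 0 ^ (1/α) + max (am - ε/2) 0 ^ (1/α)) ^ α := by
        refine hball ?_
        rw [Real.dist_eq, sub_zero, abs_of_pos hδ0]
        linarith
      set δ := ε/2 with hδdef
      set A := max (ap - δ) 0 with hAdef
      set B := max (am - δ) 0 with hBdef
      have hA0 : 0 ≤ A := le_max_right _ _
      have hB0 : 0 ≤ B := le_max_right _ _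
      set K := (A ^ (1/α) + B ^ (1/α)) ^ α with hKdef
      have hK0 : 0 < K := lt_of_le_of_lt hb'0 hKb'
      -- the index N
      have hevN : ∀ᶠ k : ℕ in atTop, (ap - δ < (k:ℝ)^α * ρp k) ∧ (am - δ < (k:ℝ)^α * ρm k) :=
        (hp.eventually (eventually_gt_nhds (by linarith))).and
          (hm.eventually (eventually_gt_nhds (by linarith)))
      obtain ⟨N0, hN0⟩ := eventually_atTop.mp hevN
      set N := max N0 1 with hNdef
      have hN1 : 1 ≤ N := le_max_right _ _
      have hρpN : ∀ k : ℕ, N ≤ k → A / (k:ℝ)^α ≤ ρp k := by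
        intro k hk
        have hk1 : 1 ≤ k := le_trans hN1 hk
        have hkc : (0:ℝ) < (k:ℝ) := by exact_mod_cast hk1
        have hkpos : (0:ℝ) < (k:ℝ)^α := Real.rpow_pos_of_pos hkc α
        rw [div_le_iff₀ hkpos]
        have h := (hN0 k (le_trans (le_max_left _ _) hk)).1
        have hAle : A ≤ (k:ℝ)^α * ρp k :=
          max_le (le_of_lt h) (mul_nonneg hkpos.le (hρp0 k))
        linarith
      have hρmN : ∀ k : ℕ, N ≤ k → B / (k:ℝ)^α ≤ ρm k := by
        intro k hk
        have hk1 : 1 ≤ k := le_trans hN1 hk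
        have hkc : (0:ℝ) < (k:ℝ) := by exact_mod_cast hk1
        have hkpos : (0:ℝ) < (k:ℝ)^α := Real.rpow_pos_of_pos hkc α
        rw [div_le_iff₀ hkpos]
        have h := (hN0 k (le_trans (le_max_left _ _) hk)).2
        have hBle : B ≤ (k:ℝ)^α * ρm k :=
          max_le (le_of_lt h) (mul_nonneg hkpos.le (hρm0 k))
        linarith
      -- case: both indices large
      have E1 : ∀ n np nm : ℕ, np + nm = n → N ≤ np → N ≤ nm →
          K ≤ (n:ℝ)^α * max (ρp np) (ρm nm) := by
        intro n np nm hsum hnp hnm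
        have hnp0 : (0:ℝ) < np := by exact_mod_cast lt_of_lt_of_le Nat.zero_lt_one (le_trans hN1 hnp)
        have hnm0 : (0:ℝ) < nm := by exact_mod_cast lt_of_lt_of_le Nat.zero_lt_one (le_trans hN1 hnm)
        have h1 := split_ineq α hα A B hA0 hB0 (hKdef ▸ hK0) (np:ℝ) (nm:ℝ) hnp0 hnm0
        have h2 : max (A/(np:ℝ)^α) (B/(nm:ℝ)^α) ≤ max (ρp np) (ρm nm) :=
          max_le_max (hρpN np hnp) (hρmN nm hnm)
        have hcast : ((np:ℝ) + (nm:ℝ)) = (n:ℝ) := by exact_mod_cast congrArg (Nat.cast : ℕ → ℝ) hsum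
        have hn0 : (0:ℝ) < n := by rw [← hcast]; linarith
        have h3 : K / (n:ℝ)^α ≤ max (ρp np) (ρm nm) := by
          rw [← hcast]
          exact le_trans h1 h2
        rw [div_le_iff₀ (Real.rpow_pos_of_pos hn0 α)] at h3
        linarith
      -- case : np < N
      have E2 : ∀ᶠ n : ℕ in atTop, ∀ np nm : ℕ, np + nm = n → np < N →
          K ≤ (n:ℝ)^α * max (ρp np) (ρm nm) := by
        by_cases hz : ρp N = 0
        · have hap0 : ap = 0 := by
            have hev0 : (fun n : ℕ => (n:ℝ)^α * ρp n) =ᶠ[atTop] (fun _ => (0:ℝ)) := by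
              filter_upwards [eventually_ge_atTop N] with k hk
              have : ρp k = 0 := le_antisymm (hz ▸ hρp hk) (hρp0 k)
              simp [this]
            exact tendsto_nhds_unique (hp.congr' hev0) tendsto_const_nhds
          have hA0' : A = 0 := by rw [hAdef]; apply max_eq_right; linarith
          have hKB : K = B := by
            rw [hKdef, hA0', Real.zero_rpow (by positivity : (1:ℝ)/α ≠ 0), zero_add,
              one_div, Real.rpow_inv_rpow hB0 (ne_of_gt hα)]
          filter_upwards [eventually_ge_atTop (2*N)] with n hn np nm hsum hnpN
          have hnmN : N ≤ nm := by omega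
          have hnm1 : 1 ≤ nm := le_trans hN1 hnmN
          have hnm0 : (0:ℝ) < nm := by exact_mod_cast hnm1
          have h1 : B / (nm:ℝ)^α ≤ ρm nm := hρmN nm hnmN
          have hlenm : (nm:ℝ) ≤ (n:ℝ) := by exact_mod_cast (by omega : nm ≤ n)
          have h2 : (nm:ℝ)^α ≤ (n:ℝ)^α := Real.rpow_le_rpow hnm0.le hlenm hα.le
          have hnmα : (0:ℝ) < (nm:ℝ)^α := Real.rpow_pos_of_pos hnm0 α
          have hone : 1 ≤ (n:ℝ)^α/(nm:ℝ)^α := (one_le_div hnmα).mpr h2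
          have h3 : B ≤ (n:ℝ)^α * (B/(nm:ℝ)^α) := by
            calc B = B * 1 := by ring
              _ ≤ B * ((n:ℝ)^α/(nm:ℝ)^α) := mul_le_mul_of_nonneg_left hone hB0
              _ = (n:ℝ)^α * (B/(nm:ℝ)^α) := by ring
          have hnα0 : (0:ℝ) ≤ (n:ℝ)^α := Real.rpow_nonneg (Nat.cast_nonneg n) α
          calc K = B := hKB
            _ ≤ (n:ℝ)^α * (B/(nm:ℝ)^α) := h3
            _ ≤ (n:ℝ)^α * ρm nm := mul_le_mul_of_nonneg_left h1 hnα0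
            _ ≤ (n:ℝ)^α * max (ρp np) (ρm nm) :=
                mul_le_mul_of_nonneg_left (le_max_right _ _) hnα0
        · have hposN : 0 < ρp N := lt_of_le_of_ne (hρp0 N) (Ne.symm hz)
          have htt : Tendsto (fun n : ℕ => (n:ℝ)^α * ρp N) atTop atTop :=
            ((tendsto_rpow_atTop hα).comp tendsto_natCast_atTop_atTop).atTop_mul_const hposN
          filter_upwards [htt.eventually_ge_atTop K] with n hn np nm hsum hnpN
          have hnα0 : (0:ℝ) ≤ (n:ℝ)^α := Real.rpow_nonneg (Nat.cast_nonneg n) α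
          have h1 : ρp N ≤ ρp np := hρp (le_of_lt hnpN)
          calc K ≤ (n:ℝ)^α * ρp N := hn
            _ ≤ (n:ℝ)^α * ρp np := mul_le_mul_of_nonneg_left h1 hnα0
            _ ≤ (n:ℝ)^α * max (ρp np) (ρm nm) :=
                mul_le_mul_of_nonneg_left (le_max_left _ _) hnα0
      -- case : nm < N
      have E3 : ∀ᶠ n : ℕ in atTop, ∀ np nm : ℕ, np + nm = n → nm < N →
          K ≤ (n:ℝ)^α * max (ρp np) (ρm nm) := by
        by_cases hz : ρm N = 0
        · have ham0 : am = 0 := by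
            have hev0 : (fun n : ℕ => (n:ℝ)^α * ρm n) =ᶠ[atTop] (fun _ => (0:ℝ)) := by
              filter_upwards [eventually_ge_atTop N] with k hk
              have : ρm k = 0 := le_antisymm (hz ▸ hρm hk) (hρm0 k)
              simp [this]
            exact tendsto_nhds_unique (hm.congr' hev0) tendsto_const_nhds
          have hB0' : B = 0 := by rw [hBdef]; apply max_eq_right; linarith
          have hKA : K = A := by
            rw [hKdef, hB0', Real.zero_rpow (by positivity : (1:ℝ)/α ≠ 0), add_zero,
              one_div, Real.rpow_inv_rpow hA0 (ne_of_gt hα)]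
          filter_upwards [eventually_ge_atTop (2*N)] with n hn np nm hsum hnmN
          have hnpN : N ≤ np := by omega
          have hnp1 : 1 ≤ np := le_trans hN1 hnpN
          have hnp0 : (0:ℝ) < np := by exact_mod_cast hnp1
          have h1 : A / (np:ℝ)^α ≤ ρp np := hρpN np hnpN
          have hlenp : (np:ℝ) ≤ (n:ℝ) := by exact_mod_cast (by omega : np ≤ n)
          have h2 : (np:ℝ)^α ≤ (n:ℝ)^α := Real.rpow_le_rpow hnp0.le hlenp hα.le
          have hnpα : (0:ℝ) < (np:ℝ)^α := Real.rpow_pos_of_pos hnp0 α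
          have hone : 1 ≤ (n:ℝ)^α/(np:ℝ)^α := (one_le_div hnpα).mpr h2
          have h3 : A ≤ (n:ℝ)^α * (A/(np:ℝ)^α) := by
            calc A = A * 1 := by ring
              _ ≤ A * ((n:ℝ)^α/(np:ℝ)^α) := mul_le_mul_of_nonneg_left hone hA0
              _ = (n:ℝ)^α * (A/(np:ℝ)^α) := by ring
          have hnα0 : (0:ℝ) ≤ (n:ℝ)^α := Real.rpow_nonneg (Nat.cast_nonneg n) α
          calc K = A := hKA
            _ ≤ (n:ℝ)^α * (A/(np:ℝ)^α) := h3
            _ ≤ (n:ℝ)^α * ρp np := mul_le_mul_of_nonneg_left h1 hnα0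
            _ ≤ (n:ℝ)^α * max (ρp np) (ρm nm) :=
                mul_le_mul_of_nonneg_left (le_max_left _ _) hnα0
        · have hposN : 0 < ρm N := lt_of_le_of_ne (hρm0 N) (Ne.symm hz)
          have htt : Tendsto (fun n : ℕ => (n:ℝ)^α * ρm N) atTop atTop :=
            ((tendsto_rpow_atTop hα).comp tendsto_natCast_atTop_atTop).atTop_mul_const hposN
          filter_upwards [htt.eventually_ge_atTop K] with n hn np nm hsum hnmN
          have hnα0 : (0:ℝ) ≤ (n:ℝ)^α := Real.rpow_nonneg (Nat.cast_nonneg n) α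
          have h1 : ρm N ≤ ρm nm := hρm (le_of_lt hnmN)
          calc K ≤ (n:ℝ)^α * ρm N := hn
            _ ≤ (n:ℝ)^α * ρm nm := mul_le_mul_of_nonneg_left h1 hnα0
            _ ≤ (n:ℝ)^α * max (ρp np) (ρm nm) :=
                mul_le_mul_of_nonneg_left (le_max_right _ _) hnα0
      filter_upwards [E2, E3, eventually_ge_atTop 1] with n h2 h3 hn1
      have hn0 : (0:ℝ) < n := by exact_mod_cast hn1
      have hnα : 0 < (n:ℝ)^α := Real.rpow_pos_of_pos hn0 α
      have hged : K / (n:ℝ)^α ≤ ρ n := by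
        apply hρ_ge
        intro np nm hsum
        have hKle : K ≤ (n:ℝ)^α * max (ρp np) (ρm nm) := by
          rcases lt_or_ge np N with h | h
          · exact h2 np nm hsum h
          · rcases lt_or_ge nm N with h' | h'
            · exact h3 np nm hsum h'
            · exact E1 n np nm hsum h h'
        rw [div_le_iff₀ hnα]
        linarith
      have hfinal : K ≤ (n:ℝ)^α * ρ n := by
        have hh := mul_le_mul_of_nonneg_left hged hnα.le
        rwa [mul_div_cancel₀ _ (ne_of_gt hnα)] at hh
      linarith
  · -- upper bound
    intro b' hb'
    have hcont : ContinuousAt (fun t : ℝ => (b + c + 2*t) ^ α) 0 :=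
      ContinuousAt.rpow_const (by fun_prop) (Or.inr hα.le)
    have hval : (b + c + 2*(0:ℝ)) ^ α < b' := by
      rw [mul_zero, add_zero]
      exact hb'
    have hev : ∀ᶠ t in nhds (0:ℝ), (b + c + 2*t) ^ α < b' :=
      hcont.tendsto.eventually (eventually_lt_nhds hval)
    obtain ⟨ε, hε, hball⟩ := Metric.eventually_nhds_iff.mp hev
    have ht0 : 0 < ε/2 := by linarith
    have htb : (b + c + 2*(ε/2)) ^ α < b' := by
      refine hball ?_
      rw [Real.dist_eq, sub_zero, abs_of_pos ht0]
      linarith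
    set t := ε/2 with htdef
    set s := b + c + 2*t with hsdef
    have hs0 : 0 < s := by rw [hsdef]; linarith
    set θ := (b + t)/s with hθdef
    have hθ0 : 0 < θ := div_pos (by linarith) hs0
    have hθ1 : θ < 1 := (div_lt_one hs0).mpr (by rw [hsdef]; linarith)
    have h1θ0 : 0 < 1 - θ := by linarith
    set k := fun n : ℕ => ⌈θ * n⌉₊ with hkdef
    have hk_le : ∀ n, k n ≤ n := by
      intro n
      rw [hkdef]
      apply Nat.ceil_le.mpr
      have : θ * n ≤ 1 * n := mul_le_mul_of_nonneg_right hθ1.le (Nat.cast_nonneg n)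
      simpa using this
    have hksum : ∀ n, k n + (n - k n) = n := fun n => Nat.add_sub_cancel' (hk_le n)
    have hratio_p : Tendsto (fun n : ℕ => (k n : ℝ)/(n:ℝ)) atTop (nhds θ) := ceil_ratio θ hθ0
    have hktop : Tendsto k atTop atTop := ceil_tendsto θ hθ0
    set km := fun n : ℕ => n - k n with hkmdef
    have hcast : ∀ n, ((km n : ℕ) : ℝ) = (n:ℝ) - (k n : ℝ) := by
      intro n
      rw [hkmdef]
      exact_mod_cast Nat.cast_sub (hk_le n)
    have hratio_m : Tendsto (fun n : ℕ => (km n : ℝ)/(n:ℝ)) atTop (nhds (1 - θ)) := by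
      have hbase : Tendsto (fun n : ℕ => 1 - (k n:ℝ)/(n:ℝ)) atTop (nhds (1 - θ)) :=
        tendsto_const_nhds.sub hratio_p
      apply hbase.congr'
      filter_upwards [eventually_ge_atTop 1] with n hn
      have hn0 : (0:ℝ) < n := by exact_mod_cast hn
      rw [hcast n, sub_div, div_self (ne_of_gt hn0)]
    have hkmtop : Tendsto km atTop atTop := by
      rw [← tendsto_natCast_atTop_iff (R := ℝ)]
      have h1 : Tendsto (fun n : ℕ => (1-θ)*(n:ℝ) + (-1)) atTop atTop :=
        tendsto_atTop_add_const_right _ (-1) (tendsto_natCast_atTop_atTop.const_mul_atTop h1θ0)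
      apply tendsto_atTop_mono ?_ h1
      intro n
      rw [hcast n]
      have hceil : ((⌈θ * n⌉₊ : ℝ)) < θ * n + 1 := Nat.ceil_lt_add_one (by positivity)
      have : (k n : ℝ) < θ * n + 1 := by rw [hkdef]; exact hceil
      nlinarith
    have limp : Tendsto (fun n : ℕ => (n:ℝ)^α * ρp (k n)) atTop (nhds (ap/θ^α)) :=
      ratio_limit α hα ap θ hθ0 ρp hp k hktop hratio_p
    have limm : Tendsto (fun n : ℕ => (n:ℝ)^α * ρm (km n)) atTop (nhds (am/(1-θ)^α)) :=
      ratio_limit α hα am (1-θ) h1θ0 ρm hm km hkmtop hratio_m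
    have hmax := limp.max limm
    -- bound the limit
    have hsα : 0 < s^α := Real.rpow_pos_of_pos hs0 α
    have hbound1 : ap/θ^α ≤ s^α := by
      have hθαpos : 0 < θ^α := Real.rpow_pos_of_pos hθ0 α
      rw [div_le_iff₀ hθαpos]
      have hθα : θ^α = (b+t)^α / s^α := by
        rw [hθdef, Real.div_rpow (by linarith) hs0.le]
      calc ap = b^α := hbα.symm
        _ ≤ (b+t)^α := Real.rpow_le_rpow hb0 (by linarith) hα.le
        _ = s^α * θ^α := by rw [hθα, mul_comm, div_mul_cancel₀ _ (ne_of_gt hsα)]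
    have hbound2 : am/(1-θ)^α ≤ s^α := by
      have h1θeq : 1 - θ = (c+t)/s := by
        rw [hθdef]
        field_simp
        ring
      have h1θαpos : 0 < (1-θ)^α := Real.rpow_pos_of_pos h1θ0 α
      rw [div_le_iff₀ h1θαpos]
      have h1θα : (1-θ)^α = (c+t)^α / s^α := by
        rw [h1θeq, Real.div_rpow (by linarith) hs0.le]
      calc am = c^α := hcα.symm
        _ ≤ (c+t)^α := Real.rpow_le_rpow hc0 (by linarith) hα.le
        _ = s^α * (1-θ)^α := by rw [h1θα, mul_comm, div_mul_cancel₀ _ (ne_of_gt hsα)]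
    have hlim_lt : max (ap/θ^α) (am/(1-θ)^α) < b' :=
      lt_of_le_of_lt (max_le hbound1 hbound2) htb
    have hev2 : ∀ᶠ n : ℕ in atTop,
        max ((n:ℝ)^α * ρp (k n)) ((n:ℝ)^α * ρm (km n)) < b' :=
      (tendsto_order.1 hmax).2 b' hlim_lt
    filter_upwards [hev2] with n hn
    have hnα0 : (0:ℝ) ≤ (n:ℝ)^α := Real.rpow_nonneg (Nat.cast_nonneg n) α
    have hle : (n:ℝ)^α * ρ n ≤ max ((n:ℝ)^α * ρp (k n)) ((n:ℝ)^α * ρm (km n)) := by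
      have h1 : ρ n ≤ max (ρp (k n)) (ρm (km n)) := hρ_le n (k n) (km n) (hksum n)
      have h2 : (n:ℝ)^α * ρ n ≤ (n:ℝ)^α * max (ρp (k n)) (ρm (km n)) :=
        mul_le_mul_of_nonneg_left h1 hnα0
      rwa [mul_max_of_nonneg _ _ hnα0] at h2
    exact lt_of_le_of_lt hle hn
end

section
/- For a non-increasing sequence (ρ_n)_{n≥0} of nonnegative reals tending to 0 and α > 0, a ≥ 0, the following are equivalent: (i) lim_{n→∞} n^α ρ_n = a; (ii) lim_{s→0⁺} s^{1/α} ν(s) = a^{1/α}, where ν(s) = #{n ≥ 0 : ρ_n > s}. -/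
/-!
Substituting `σ n = ρ n ^ (1/α)` and `t = s ^ (1/α)` reduces the statement to `α = 1`. There,
with `N = ν(s)` one has `ρ N ≤ s < ρ (N - 1)`, so `s N` is squeezed between `N ρ N` and
`N ρ (N - 1)`; conversely `n ρ n` is squeezed between `ν(s) s` at `s = ρ n` and at
`s = ρ n · n/(n+1)`, just below `ρ n`. This needs `ν(s) → ∞`, i.e. `ρ > 0`; if some
`ρ n = 0`, both sides tend to `0`.
-/

open Filter Topology Set

/-- The paper's `ν(s)`. -/
noncomputable def countAbove (ρ : ℕ → ℝ) (s : ℝ) : ℕ := {n | s < ρ n}.ncard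

section CountAbove

variable {ρ : ℕ → ℝ} {s : ℝ} {n : ℕ}

theorem finite_setOf_lt_of_tendsto_zero (hlim : Tendsto ρ atTop (𝓝 0)) (hs : 0 < s) :
    {n | s < ρ n}.Finite := by
  have h : ∀ᶠ n in cofinite, ρ n ≤ s :=
    Nat.cofinite_eq_atTop ▸ hlim.eventually (ge_mem_nhds hs)
  simpa only [eventually_cofinite, not_le] using h

theorem countAbove_le_of_le (hρ : Antitone ρ) (h : ρ n ≤ s) : countAbove ρ s ≤ n := by
  have hsub : {m | s < ρ m} ⊆ Iio n := fun m hm =>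
    lt_of_not_ge fun hnm => (hρ hnm |>.trans h).not_gt hm
  simpa [countAbove] using ncard_le_ncard hsub (finite_Iio n)

theorem lt_countAbove_of_lt (hρ : Antitone ρ) (hlim : Tendsto ρ atTop (𝓝 0)) (hs : 0 < s)
    (h : s < ρ n) : n < countAbove ρ s := by
  have hsub : Iic n ⊆ {m | s < ρ m} := fun m hm => h.trans_le (hρ hm)
  simpa [countAbove] using ncard_le_ncard hsub (finite_setOf_lt_of_tendsto_zero hlim hs)

theorem apply_countAbove_le (hρ : Antitone ρ) (hlim : Tendsto ρ atTop (𝓝 0)) (hs : 0 < s) :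
    ρ (countAbove ρ s) ≤ s :=
  le_of_not_gt fun h => (lt_countAbove_of_lt hρ hlim hs h).false

theorem lt_apply_countAbove_sub_one (hρ : Antitone ρ) (hs : 0 < countAbove ρ s) :
    s < ρ (countAbove ρ s - 1) :=
  lt_of_not_ge fun h => (countAbove_le_of_le hρ h).not_gt (Nat.sub_one_lt hs.ne')

theorem tendsto_countAbove_atTop (hρ : Antitone ρ) (hlim : Tendsto ρ atTop (𝓝 0))
    (hpos : ∀ n, 0 < ρ n) : Tendsto (countAbove ρ) (𝓝[>] 0) atTop := by
  refine tendsto_atTop.2 fun n => ?_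
  filter_upwards [Ioo_mem_nhdsGT (hpos n)] with s hs
  exact (lt_countAbove_of_lt hρ hlim hs.1 hs.2).le

theorem tendsto_mul_countAbove_zero_of_apply_nonpos (hρ : Antitone ρ) (hn : ρ n ≤ 0) :
    Tendsto (fun s => s * countAbove ρ s) (𝓝[>] 0) (𝓝 0) := by
  have hlin : Tendsto (fun s : ℝ => s * n) (𝓝[>] 0) (𝓝 0) := by
    simpa using (tendsto_id.mono_left (nhdsWithin_le_nhds (a := (0 : ℝ)))).mul_const (n : ℝ)
  refine tendsto_of_tendsto_of_tendsto_of_le_of_le' tendsto_const_nhds hlin ?_ ?_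
  all_goals filter_upwards [self_mem_nhdsWithin] with s (hs : 0 < s)
  · positivity
  · gcongr
    exact_mod_cast countAbove_le_of_le hρ (hn.trans hs.le)

theorem tendsto_natCast_mul_zero_of_apply_nonpos (hρ : Antitone ρ)
    (hlim : Tendsto ρ atTop (𝓝 0)) (hn : ρ n ≤ 0) : Tendsto (fun m : ℕ => m * ρ m) atTop (𝓝 0) := by
  refine tendsto_const_nhds.congr' ?_
  filter_upwards [eventually_ge_atTop n] with m hm
  rw [le_antisymm ((hρ hm).trans hn) (hρ.le_of_tendsto hlim m), mul_zero]

variable {b : ℝ}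

theorem tendsto_mul_countAbove_of_tendsto_natCast_mul (hρ : Antitone ρ)
    (hlim : Tendsto ρ atTop (𝓝 0)) (hpos : ∀ n, 0 < ρ n)
    (h : Tendsto (fun n : ℕ => n * ρ n) atTop (𝓝 b)) :
    Tendsto (fun s => s * countAbove ρ s) (𝓝[>] 0) (𝓝 b) := by
  have hν := tendsto_countAbove_atTop hρ hlim hpos
  have hshift : Tendsto (fun n : ℕ => n * ρ (n - 1)) atTop (𝓝 b) := by
    rw [← tendsto_add_atTop_iff_nat 1]
    refine (add_zero b ▸ h.add hlim).congr fun n => ?_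
    simp only [add_tsub_cancel_right]
    push_cast
    ring
  refine tendsto_of_tendsto_of_tendsto_of_le_of_le' (h.comp hν) (hshift.comp hν) ?_ ?_
  all_goals filter_upwards [self_mem_nhdsWithin] with s (hs : 0 < s)
  · rw [Function.comp_apply, mul_comm]
    gcongr
    exact apply_countAbove_le hρ hlim hs
  · rcases (countAbove ρ s).eq_zero_or_pos with h0 | h0
    · simp [h0]
    · rw [Function.comp_apply, mul_comm]
      gcongr
      exact (lt_apply_countAbove_sub_one hρ h0).le

theorem tendsto_natCast_mul_of_tendsto_mul_countAbove (hρ : Antitone ρ)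
    (hlim : Tendsto ρ atTop (𝓝 0)) (hpos : ∀ n, 0 < ρ n)
    (h : Tendsto (fun s => s * countAbove ρ s) (𝓝[>] 0) (𝓝 b)) :
    Tendsto (fun n : ℕ => n * ρ n) atTop (𝓝 b) := by
  set t : ℕ → ℝ := fun n => ρ n * (n / (n + 1))
  have hρ' : Tendsto ρ atTop (𝓝[>] 0) := tendsto_nhdsWithin_iff.2 ⟨hlim, .of_forall hpos⟩
  have ht : Tendsto t atTop (𝓝[>] 0) := by
    refine tendsto_nhdsWithin_iff.2
      ⟨by simpa using hlim.mul (tendsto_natCast_div_add_atTop 1), ?_⟩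
    filter_upwards [eventually_ge_atTop 1] with n hn
    have : (0 : ℝ) < n := by exact_mod_cast hn
    exact mul_pos (hpos n) (by positivity)
  refine tendsto_of_tendsto_of_tendsto_of_le_of_le' (h.comp hρ') (h.comp ht) ?_ ?_
  · filter_upwards with n
    rw [Function.comp_apply, mul_comm]
    gcongr
    · exact (hpos n).le
    · exact_mod_cast countAbove_le_of_le hρ le_rfl
  · filter_upwards [ht.eventually self_mem_nhdsWithin] with n (htn : 0 < t n)
    have hlt : t n < ρ n := mul_lt_of_lt_one_right (hpos n) (by
      rw [div_lt_one (by positivity)]; linarith)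
    have hcount : (n : ℝ) + 1 ≤ countAbove ρ (t n) := by
      exact_mod_cast lt_countAbove_of_lt hρ hlim htn hlt
    calc (n : ℝ) * ρ n = t n * (n + 1) := by simp only [t]; field_simp
      _ ≤ t n * countAbove ρ (t n) := by gcongr

theorem tendsto_natCast_mul_iff_tendsto_mul_countAbove (hρ : Antitone ρ)
    (hlim : Tendsto ρ atTop (𝓝 0)) :
    Tendsto (fun n : ℕ => n * ρ n) atTop (𝓝 b) ↔
      Tendsto (fun s => s * countAbove ρ s) (𝓝[>] 0) (𝓝 b) := by
  by_cases hpos : ∀ n, 0 < ρ n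
  · exact ⟨tendsto_mul_countAbove_of_tendsto_natCast_mul hρ hlim hpos,
      tendsto_natCast_mul_of_tendsto_mul_countAbove hρ hlim hpos⟩
  · obtain ⟨n, hn⟩ := not_forall.1 hpos
    have hseq := tendsto_natCast_mul_zero_of_apply_nonpos hρ hlim (not_lt.1 hn)
    have hfun := tendsto_mul_countAbove_zero_of_apply_nonpos hρ (not_lt.1 hn)
    exact ⟨fun h => tendsto_nhds_unique hseq h ▸ hfun,
      fun h => tendsto_nhds_unique hfun h ▸ hseq⟩

end CountAbove

theorem countAbove_rpow {ρ : ℕ → ℝ} (hρ0 : ∀ n, 0 ≤ ρ n) {s p : ℝ} (hs : 0 ≤ s)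
    (hp : 0 < p) :
    countAbove (fun n => ρ n ^ p) (s ^ p) = countAbove ρ s := by
  simp only [countAbove, Real.rpow_lt_rpow_iff hs (hρ0 _) hp]

theorem tendsto_rpow_iff_of_nonneg {β : Type*} {l : Filter β} {f : β → ℝ} {a p : ℝ}
    (hf : ∀ x, 0 ≤ f x) (ha : 0 ≤ a) (hp : 0 < p) :
    Tendsto (fun x => f x ^ p) l (𝓝 (a ^ p)) ↔ Tendsto f l (𝓝 a) := by
  refine ⟨fun h => ?_, fun h => h.rpow_const (Or.inr hp.le)⟩
  simpa [Real.rpow_rpow_inv, hf, ha, hp.ne'] using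
    h.rpow_const (p := p⁻¹) (Or.inr (inv_pos.2 hp).le)

theorem tendsto_rpow_nhdsGT_zero {p : ℝ} (hp : 0 < p) :
    Tendsto (fun s : ℝ => s ^ p) (𝓝[>] 0) (𝓝[>] 0) := by
  refine tendsto_nhdsWithin_iff.2
    ⟨?_, eventually_mem_nhdsWithin.mono fun s hs => Real.rpow_pos_of_pos hs p⟩
  simpa [Real.zero_rpow hp.ne'] using
    (Real.continuousAt_rpow_const 0 p (Or.inr hp.le)).tendsto.mono_left nhdsWithin_le_nhds

theorem tendsto_comp_rpow_nhdsGT_zero_iff {α : Type*} {g : ℝ → α} {l : Filter α} {p : ℝ}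
    (hp : 0 < p) : Tendsto (fun s => g (s ^ p)) (𝓝[>] 0) l ↔ Tendsto g (𝓝[>] 0) l := by
  refine ⟨fun h => ?_, fun h => h.comp (tendsto_rpow_nhdsGT_zero hp)⟩
  refine (h.comp (tendsto_rpow_nhdsGT_zero (inv_pos.2 hp))).congr' ?_
  filter_upwards [self_mem_nhdsWithin] with s (hs : 0 < s)
  simp [Real.rpow_inv_rpow hs.le hp.ne']

/-- For a non-increasing nonnegative null sequence `ρ` and `α > 0`, `a ≥ 0`:
`n^α ρ_n → a` iff `s^{1/α} ν(s) → a^{1/α}` as `s → 0⁺`, where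
`ν(s) = #{n : ρ_n > s}`. -/
theorem stmt15 (ρ : ℕ → ℝ) (hρ : Antitone ρ) (hρ0 : ∀ n, 0 ≤ ρ n)
    (hlim : Tendsto ρ atTop (nhds 0)) (α a : ℝ) (hα : 0 < α) (ha : 0 ≤ a) :
    Tendsto (fun n : ℕ => (n : ℝ) ^ α * ρ n) atTop (nhds a) ↔
      Tendsto (fun s : ℝ => s ^ (1 / α) * ({n : ℕ | s < ρ n}.ncard : ℝ))
        (nhdsWithin 0 (Set.Ioi 0)) (nhds (a ^ (1 / α))) := by
  have hp : 0 < 1 / α := one_div_pos.2 hα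
  set σ : ℕ → ℝ := fun n => ρ n ^ (1 / α)
  have hσ : Antitone σ := fun m n h => Real.rpow_le_rpow (hρ0 n) (hρ h) hp.le
  have hσlim : Tendsto σ atTop (𝓝 0) :=
    Real.zero_rpow hp.ne' ▸ hlim.rpow_const (Or.inr hp.le)
  have hpow (n : ℕ) : ((n : ℝ) ^ α * ρ n) ^ (1 / α) = n * σ n := by
    rw [Real.mul_rpow (by positivity) (hρ0 n), ← Real.rpow_mul n.cast_nonneg,
      mul_one_div_cancel hα.ne', Real.rpow_one]
  rw [← tendsto_rpow_iff_of_nonneg (fun n => mul_nonneg (by positivity) (hρ0 n)) ha hp,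
    funext hpow, tendsto_natCast_mul_iff_tendsto_mul_countAbove hσ hσlim,
    ← tendsto_comp_rpow_nhdsGT_zero_iff hp]
  refine tendsto_congr' ?_
  filter_upwards [self_mem_nhdsWithin] with s (hs : 0 < s)
  rw [countAbove_rpow hρ0 hs.le hp, countAbove]
end
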